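/- arXiv:1802.05235 — 3 statements merged into one kernel-verified Lean document; each statement's English description precedes it below -/
import Mathlib

section
/- The function ρ_ε^c defined by ρ_ε^c(x) = x²/(x² + ε²) for |x| < ε/√3 and ρ_ε^c(x) = (1/8)((3√3/ε)|x| − 1) for |x| ≥ ε/√3 is convex on ℝ. -/
/-! On `[-ε/√3, ε/√3]` the Geman–McClure function `x²/(x² + ε²)` has second derivative
`2ε²(ε² - 3x²)/(x² + ε²)³ ≥ 0`, and outside that interval `ρ_ε^c` continues along the tangent
lines at `±ε/√3`. So `ρ_ε^c` is differentiable, its derivative at `x` being the Geman–McClure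
derivative at the projection of `x` onto `[-ε/√3, ε/√3]`, which is monotone. -/

open Set Filter Topology Real

theorem hasDerivAt_of_eventuallyEq_nhdsLE_nhdsGE {f g h : ℝ → ℝ} {f' x : ℝ}
    (hg : HasDerivAt g f' x) (hh : HasDerivAt h f' x)
    (hfg : f =ᶠ[𝓝[≤] x] g) (hfh : f =ᶠ[𝓝[≥] x] h) : HasDerivAt f f' x := by
  have := (hg.hasDerivWithinAt.congr_of_eventuallyEq_of_mem hfg self_mem_Iic).union
    (hh.hasDerivWithinAt.congr_of_eventuallyEq_of_mem hfh self_mem_Ici)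
  rwa [Iic_union_Ici, hasDerivWithinAt_univ] at this

noncomputable def gemanMcClure (ε x : ℝ) : ℝ := x ^ 2 / (x ^ 2 + ε ^ 2)

noncomputable def gemanMcClureDeriv (ε x : ℝ) : ℝ := 2 * x * ε ^ 2 / (x ^ 2 + ε ^ 2) ^ 2

noncomputable def convexGemanMcClure (ε x : ℝ) : ℝ :=
  if |x| < ε / √3 then gemanMcClure ε x else (1 / 8) * ((3 * √3 / ε) * |x| - 1)

section
variable {ε : ℝ}

theorem gemanMcClure_neg (x : ℝ) : gemanMcClure ε (-x) = gemanMcClure ε x := by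
  simp [gemanMcClure]

theorem gemanMcClureDeriv_neg (x : ℝ) : gemanMcClureDeriv ε (-x) = -gemanMcClureDeriv ε x := by
  simp only [gemanMcClureDeriv, neg_sq]; ring

theorem hasDerivAt_gemanMcClure (hε : ε ≠ 0) (x : ℝ) :
    HasDerivAt (gemanMcClure ε) (gemanMcClureDeriv ε x) x := by
  have hpos : x ^ 2 + ε ^ 2 ≠ 0 := by positivity
  refine ((hasDerivAt_pow 2 x).div ((hasDerivAt_pow 2 x).add_const (ε ^ 2)) hpos).congr_deriv ?_
  simp only [gemanMcClureDeriv]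
  ring

theorem hasDerivAt_gemanMcClureDeriv (hε : ε ≠ 0) (x : ℝ) :
    HasDerivAt (gemanMcClureDeriv ε) (2 * ε ^ 2 * (ε ^ 2 - 3 * x ^ 2) / (x ^ 2 + ε ^ 2) ^ 3) x := by
  have hpos : x ^ 2 + ε ^ 2 ≠ 0 := by positivity
  have hnum : HasDerivAt (fun x => 2 * x * ε ^ 2) (2 * ε ^ 2) x := by
    simpa using ((hasDerivAt_id x).const_mul 2).mul_const (ε ^ 2)
  refine (hnum.div (((hasDerivAt_pow 2 x).add_const (ε ^ 2)).fun_pow 2)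
    (pow_ne_zero 2 hpos)).congr_deriv ?_
  field_simp
  ring

theorem monotoneOn_gemanMcClureDeriv (hε : ε ≠ 0) :
    MonotoneOn (gemanMcClureDeriv ε) (Icc (-(ε / √3)) (ε / √3)) := by
  refine monotoneOn_of_deriv_nonneg (convex_Icc _ _)
    (fun x _ => (hasDerivAt_gemanMcClureDeriv hε x).continuousAt.continuousWithinAt)
    (fun x _ => (hasDerivAt_gemanMcClureDeriv hε x).differentiableAt.differentiableWithinAt)
    fun x hx => ?_
  rw [interior_Icc] at hx
  have hx2 : x ^ 2 < ε ^ 2 / 3 := by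
    simpa [div_pow] using sq_lt_sq' hx.1 hx.2
  rw [(hasDerivAt_gemanMcClureDeriv hε x).deriv]
  have : 0 ≤ ε ^ 2 - 3 * x ^ 2 := by linarith
  positivity

theorem gemanMcClure_threshold (hε : ε ≠ 0) : gemanMcClure ε (ε / √3) = 1 / 4 := by
  have h3 : √3 ^ 2 = 3 := sq_sqrt (by norm_num)
  simp only [gemanMcClure, div_pow, h3]
  field_simp
  ring

theorem gemanMcClureDeriv_threshold (hε : ε ≠ 0) :
    gemanMcClureDeriv ε (ε / √3) = 3 * √3 / (8 * ε) := by
  have h3 : √3 ^ 2 = 3 := sq_sqrt (by norm_num)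
  simp only [gemanMcClureDeriv, div_pow, h3]
  field_simp
  linear_combination -16 * h3

theorem convexGemanMcClure_neg (x : ℝ) : convexGemanMcClure ε (-x) = convexGemanMcClure ε x := by
  simp only [convexGemanMcClure, abs_neg, gemanMcClure_neg]

theorem convexGemanMcClure_of_abs_le (hε : ε ≠ 0) {x : ℝ} (hx : |x| ≤ ε / √3) :
    convexGemanMcClure ε x = gemanMcClure ε x := by
  rcases hx.lt_or_eq with hlt | heq
  · simp only [convexGemanMcClure, if_pos hlt]
  · have h3 : √3 ^ 2 = 3 := sq_sqrt (by norm_num)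
    have hx2 : x ^ 2 = (ε / √3) ^ 2 := by rw [← sq_abs, heq]
    simp only [convexGemanMcClure, heq, lt_irrefl, if_false, gemanMcClure, hx2, div_pow, h3]
    field_simp
    ring

theorem convexGemanMcClure_of_le (hε : 0 < ε) {x : ℝ} (hx : ε / √3 ≤ x) :
    convexGemanMcClure ε x =
      gemanMcClure ε (ε / √3) + gemanMcClureDeriv ε (ε / √3) * (x - ε / √3) := by
  have hx0 : 0 ≤ x := (div_nonneg hε.le (sqrt_nonneg 3)).trans hx
  rw [gemanMcClure_threshold hε.ne', gemanMcClureDeriv_threshold hε.ne']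
  simp only [convexGemanMcClure, abs_of_nonneg hx0, not_lt.mpr hx, if_false]
  field_simp
  ring

theorem convexGemanMcClure_of_le_neg (hε : 0 < ε) {x : ℝ} (hx : x ≤ -(ε / √3)) :
    convexGemanMcClure ε x =
      gemanMcClure ε (-(ε / √3)) + gemanMcClureDeriv ε (-(ε / √3)) * (x + ε / √3) := by
  rw [← convexGemanMcClure_neg, convexGemanMcClure_of_le hε (le_neg_of_le_neg hx),
    gemanMcClure_neg, gemanMcClureDeriv_neg]
  ring

theorem hasDerivAt_convexGemanMcClure (hε : 0 < ε) (x : ℝ) :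
    HasDerivAt (convexGemanMcClure ε)
      (gemanMcClureDeriv ε (max (-(ε / √3)) (min (ε / √3) x))) x := by
  set a := ε / √3
  have ha : 0 < a := by positivity
  have hq := hasDerivAt_gemanMcClure hε.ne'
  have hright (y : ℝ) : HasDerivAt (fun y => gemanMcClure ε a + gemanMcClureDeriv ε a * (y - a))
      (gemanMcClureDeriv ε a) y := by
    simpa using (((hasDerivAt_id y).sub_const a).const_mul (gemanMcClureDeriv ε a)).const_add
      (gemanMcClure ε a)
  have hleft (y : ℝ) :
      HasDerivAt (fun y => gemanMcClure ε (-a) + gemanMcClureDeriv ε (-a) * (y + a))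
        (gemanMcClureDeriv ε (-a)) y := by
    simpa using (((hasDerivAt_id y).add_const a).const_mul (gemanMcClureDeriv ε (-a))).const_add
      (gemanMcClure ε (-a))
  have hmid : EqOn (convexGemanMcClure ε) (gemanMcClure ε) (Icc (-a) a) := fun y hy =>
    convexGemanMcClure_of_abs_le hε.ne' (abs_le.2 hy)
  rcases lt_trichotomy x (-a) with hx | rfl | hx
  · rw [min_eq_right (by linarith), max_eq_left hx.le]
    exact (hleft x).congr_of_eventuallyEq <| eventuallyEq_of_mem (Iio_mem_nhds hx)
      fun y hy => convexGemanMcClure_of_le_neg hε (le_of_lt hy)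
  · rw [min_eq_right (by linarith), max_self]
    exact hasDerivAt_of_eventuallyEq_nhdsLE_nhdsGE (hleft _) (hq _)
      (eventually_nhdsWithin_of_forall fun y hy => convexGemanMcClure_of_le_neg hε hy)
      (eventuallyEq_of_mem (Ico_mem_nhdsGE (by linarith)) (hmid.mono Ico_subset_Icc_self))
  rcases lt_trichotomy x a with hx' | rfl | hx'
  · rw [min_eq_right hx'.le, max_eq_right hx.le]
    exact (hq x).congr_of_eventuallyEq <| eventuallyEq_of_mem (Ioo_mem_nhds hx hx')
      (hmid.mono Ioo_subset_Icc_self)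
  · rw [min_self, max_eq_right (by linarith)]
    exact hasDerivAt_of_eventuallyEq_nhdsLE_nhdsGE (hq _) (hright _)
      (eventuallyEq_of_mem (Ioc_mem_nhdsLE hx) (hmid.mono Ioc_subset_Icc_self))
      (eventually_nhdsWithin_of_forall fun y hy => convexGemanMcClure_of_le hε hy)
  · rw [min_eq_left hx'.le, max_eq_right (by linarith)]
    exact (hright x).congr_of_eventuallyEq <| eventuallyEq_of_mem (Ioi_mem_nhds hx')
      fun y hy => convexGemanMcClure_of_le hε (le_of_lt hy)

theorem monotone_gemanMcClureDeriv_clamp (hε : 0 < ε) :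
    Monotone fun x => gemanMcClureDeriv ε (max (-(ε / √3)) (min (ε / √3) x)) := by
  have ha : -(ε / √3) ≤ ε / √3 := by linarith [show 0 < ε / √3 by positivity]
  intro x y hxy
  exact monotoneOn_gemanMcClureDeriv hε.ne' ⟨le_max_left _ _, max_le ha (min_le_left _ _)⟩
    ⟨le_max_left _ _, max_le ha (min_le_left _ _)⟩
    (max_le_max_left _ (min_le_min_left _ hxy))

end

/-- The convexified Geman–McClure function, equal to `x²/(x² + ε²)` for
`|x| < ε/√3` and `(1/8)((3√3/ε)|x| − 1)` for `|x| ≥ ε/√3`, is convex on `ℝ`. -/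
theorem stmt_8 (ε : ℝ) (hε : 0 < ε)
    (ρc : ℝ → ℝ)
    (hρc : ∀ x, ρc x = if |x| < ε / Real.sqrt 3 then x ^ 2 / (x ^ 2 + ε ^ 2)
      else (1 / 8) * ((3 * Real.sqrt 3 / ε) * |x| - 1)) :
    ConvexOn ℝ Set.univ ρc := by
  obtain rfl : ρc = convexGemanMcClure ε := funext hρc
  have hderiv := hasDerivAt_convexGemanMcClure hε
  refine Monotone.convexOn_univ_of_deriv (fun x => (hderiv x).differentiableAt) ?_
  rw [funext fun x => (hderiv x).deriv]
  exact monotone_gemanMcClureDeriv_clamp hε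
end

section
/- Let Q and C be symmetric matrices such that every nonzero v with v^T C v = 0 satisfies v^T Q v > 0, and suppose the set {x : c(x) = 0} is nonempty, where c(x) = x^T C x + 2 g^T x + γ is a quadratic with Hessian 2C. Then the problem min{ q(x) : c(x) = 0 } with q a quadratic with Hessian 2Q attains a global minimizer. -/
/-! Compactness of the unit sphere turns the hypothesis into the coercivity bound
`ε ‖x‖² ≤ xᵀQx + μ |xᵀCx|`. On the feasible set `|xᵀCx| = |2 hᵀx + γc|` grows only linearly,
so `q` grows quadratically there; as the feasible set is closed, `q` attains its minimum on it. -/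

open Matrix Filter Topology

section QuadraticForm

variable {ι : Type*} [Fintype ι]

theorem continuous_dotProduct_mulVec_self (A : Matrix ι ι ℝ) :
    Continuous fun x : ι → ℝ => x ⬝ᵥ A *ᵥ x :=
  continuous_id.dotProduct (continuous_const.matrix_mulVec continuous_id)

theorem continuous_quadratic (A : Matrix ι ι ℝ) (g : ι → ℝ) (γ : ℝ) :
    Continuous fun x : ι → ℝ => x ⬝ᵥ A *ᵥ x + 2 * (g ⬝ᵥ x) + γ :=
  ((continuous_dotProduct_mulVec_self A).add
    (continuous_const.mul (continuous_const.dotProduct continuous_id))).add continuous_const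

theorem dotProduct_mulVec_smul_self (A : Matrix ι ι ℝ) (a : ℝ) (x : ι → ℝ) :
    (a • x) ⬝ᵥ A *ᵥ (a • x) = a ^ 2 * (x ⬝ᵥ A *ᵥ x) := by
  rw [Matrix.mulVec_smul, smul_dotProduct, dotProduct_smul, smul_eq_mul, smul_eq_mul]
  ring

theorem abs_dotProduct_le (g x : ι → ℝ) : |g ⬝ᵥ x| ≤ (∑ i, |g i|) * ‖x‖ :=
  calc |∑ i, g i * x i| ≤ ∑ i, |g i * x i| := Finset.abs_sum_le_sum_abs _ _
    _ ≤ ∑ i, |g i| * ‖x‖ := by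
        refine Finset.sum_le_sum fun i _ => ?_
        rw [abs_mul]
        exact mul_le_mul_of_nonneg_left (norm_le_pi_norm x i) (abs_nonneg _)
    _ = (∑ i, |g i|) * ‖x‖ := (Finset.sum_mul _ _ _).symm

end QuadraticForm

theorem IsCompact.exists_pos_le_add_mul {X : Type*} [TopologicalSpace X] {K : Set X}
    {f g : X → ℝ} (hK : IsCompact K) (hf : Continuous f) (hg : Continuous g) (hg0 : 0 ≤ g)
    (hfg : ∀ x ∈ K, g x = 0 → 0 < f x) :
    ∃ μ ε : ℝ, 0 ≤ μ ∧ 0 < ε ∧ ∀ x ∈ K, ε ≤ f x + μ * g x := by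
  set U : ℕ → Set X := fun k => {x | 1 / ((k : ℝ) + 1) < f x + k * g x}
  have hopen : ∀ k, IsOpen (U k) := fun k =>
    isOpen_lt continuous_const (hf.add (continuous_const.mul hg))
  have hmono : Monotone U := by
    intro k l hkl x hx
    have hkl' : (k : ℝ) ≤ l := by exact_mod_cast hkl
    calc 1 / ((l : ℝ) + 1) ≤ 1 / ((k : ℝ) + 1) := by gcongr
      _ < f x + k * g x := hx
      _ ≤ f x + l * g x := by gcongr; exact hg0 x
  have hcover : K ⊆ ⋃ k, U k := by
    intro x hx
    rw [Set.mem_iUnion]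
    rcases (hg0 x).eq_or_lt with hzero | hpos
    · obtain ⟨k, hk⟩ := exists_nat_one_div_lt (hfg x hx hzero.symm)
      refine ⟨k, ?_⟩
      simpa [U, ← hzero] using hk
    · obtain ⟨k, hk⟩ := exists_nat_gt ((1 - f x) / g x)
      refine ⟨k, ?_⟩
      have hlt : 1 - f x < k * g x := (div_lt_iff₀ hpos).1 hk
      have hle : 1 / ((k : ℝ) + 1) ≤ 1 := div_le_one_of_le₀ (by linarith [k.cast_nonneg (α := ℝ)])
        (by positivity)
      show 1 / ((k : ℝ) + 1) < f x + k * g x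
      linarith
  obtain ⟨k, hk⟩ := hK.elim_directed_cover U hopen hcover hmono.directed_le
  exact ⟨k, 1 / ((k : ℝ) + 1), k.cast_nonneg, by positivity, fun x hx => (hk hx).le⟩

theorem Matrix.exists_mul_norm_sq_le_of_pos_on_isotropic {ι : Type*} [Fintype ι]
    {A B : Matrix ι ι ℝ} (h : ∀ v, v ≠ 0 → v ⬝ᵥ B *ᵥ v = 0 → 0 < v ⬝ᵥ A *ᵥ v) :
    ∃ μ ε : ℝ, 0 ≤ μ ∧ 0 < ε ∧ ∀ x, ε * ‖x‖ ^ 2 ≤ x ⬝ᵥ A *ᵥ x + μ * |x ⬝ᵥ B *ᵥ x| := by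
  obtain ⟨μ, ε, hμ, hε, hsphere⟩ := (isCompact_sphere (0 : ι → ℝ) 1).exists_pos_le_add_mul
    (continuous_dotProduct_mulVec_self A) (continuous_dotProduct_mulVec_self B).abs
    (fun _ => abs_nonneg _)
    (fun v hv hB => h v (ne_zero_of_mem_unit_sphere ⟨v, hv⟩) (abs_eq_zero.1 hB))
  refine ⟨μ, ε, hμ, hε, fun x => ?_⟩
  rcases eq_or_ne x 0 with rfl | hx
  · simp
  have hr : 0 < ‖x‖ := norm_pos_iff.2 hx
  have hunit := hsphere (‖x‖⁻¹ • x) (by simp [norm_smul, hr.ne'])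
  rw [dotProduct_mulVec_smul_self, dotProduct_mulVec_smul_self, abs_mul,
    abs_of_nonneg (sq_nonneg _)] at hunit
  calc ε * ‖x‖ ^ 2
      ≤ (‖x‖⁻¹ ^ 2 * (x ⬝ᵥ A *ᵥ x) + μ * (‖x‖⁻¹ ^ 2 * |x ⬝ᵥ B *ᵥ x|)) * ‖x‖ ^ 2 := by gcongr
    _ = x ⬝ᵥ A *ᵥ x + μ * |x ⬝ᵥ B *ᵥ x| := by field_simp

theorem tendsto_cocompact_inf_principal_atTop_of_norm_sq_le {E : Type*}
    [NormedAddCommGroup E] [ProperSpace E] {S : Set E} {φ : E → ℝ} {ε b d : ℝ} (hε : 0 < ε)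
    (hφ : ∀ x ∈ S, ε * ‖x‖ ^ 2 - b * ‖x‖ - d ≤ φ x) :
    Tendsto φ (cocompact E ⊓ 𝓟 S) atTop := by
  have hlin : Tendsto (fun r : ℝ => ε * r - b) atTop atTop :=
    tendsto_atTop_add_const_right _ _ (tendsto_id.const_mul_atTop hε)
  have hpoly : Tendsto (fun r : ℝ => ε * r ^ 2 - b * r - d) atTop atTop :=
    (tendsto_atTop_add_const_right _ (-d) (tendsto_id.atTop_mul_atTop₀ hlin)).congr
      fun r => by simp only [id]; ring
  exact tendsto_atTop_mono' _ (eventually_inf_principal.2 (Eventually.of_forall hφ))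
    (hpoly.comp (tendsto_norm_cocompact_atTop.mono_left inf_le_left))

theorem stmt_11_general (n : ℕ)
    (Q C : Matrix (Fin n) (Fin n) ℝ)
    (g h : Fin n → ℝ) (γq γc : ℝ)
    (q c : (Fin n → ℝ) → ℝ)
    (hq : ∀ x, q x = x ⬝ᵥ Q.mulVec x + 2 * (g ⬝ᵥ x) + γq)
    (hc : ∀ x, c x = x ⬝ᵥ C.mulVec x + 2 * (h ⬝ᵥ x) + γc)
    (hfeas : ∃ x, c x = 0)
    (hcond : ∀ v : Fin n → ℝ, v ≠ 0 → v ⬝ᵥ C.mulVec v = 0 → 0 < v ⬝ᵥ Q.mulVec v) :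
    ∃ xstar, c xstar = 0 ∧ ∀ x, c x = 0 → q xstar ≤ q x := by
  obtain ⟨x₀, hx₀⟩ := hfeas
  obtain ⟨μ, ε, hμ, hε, hQC⟩ := Matrix.exists_mul_norm_sq_le_of_pos_on_isotropic hcond
  have hq_cont : Continuous q := funext hq ▸ continuous_quadratic Q g γq
  have hc_cont : Continuous c := funext hc ▸ continuous_quadratic C h γc
  have hlower : ∀ x ∈ {x | c x = 0}, ε * ‖x‖ ^ 2 - (2 * μ * ∑ i, |h i| + 2 * ∑ i, |g i|) * ‖x‖
      - (μ * |γc| - γq) ≤ q x := by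
    intro x hx
    have hCx : |x ⬝ᵥ C *ᵥ x| ≤ 2 * ((∑ i, |h i|) * ‖x‖) + |γc| := by
      rw [show x ⬝ᵥ C *ᵥ x = -(2 * (h ⬝ᵥ x) + γc) by linarith [hc x, hx.out], abs_neg]
      calc |2 * (h ⬝ᵥ x) + γc| ≤ 2 * |h ⬝ᵥ x| + |γc| := by
            simpa only [abs_mul, abs_two] using abs_add_le (2 * (h ⬝ᵥ x)) γc
        _ ≤ 2 * ((∑ i, |h i|) * ‖x‖) + |γc| := by gcongr; exact abs_dotProduct_le h x
    linarith [hq x, hQC x, mul_le_mul_of_nonneg_left hCx hμ, neg_abs_le (g ⬝ᵥ x),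
      abs_dotProduct_le g x]
  obtain ⟨xstar, hxstar, hmin⟩ := hq_cont.continuousOn.exists_isMinOn'
    (isClosed_eq hc_cont continuous_const) hx₀
    ((tendsto_cocompact_inf_principal_atTop_of_norm_sq_le hε hlower).eventually_ge_atTop (q x₀))
  exact ⟨xstar, hxstar, fun x hx => hmin hx⟩

/-- Moré's existence theorem for the GTRS: if `q` and `c` are quadratics with
(half-)Hessians `Q` and `C`, the feasible set `{x : c(x) = 0}` is nonempty, and
every nonzero `v` with `vᵀ C v = 0` satisfies `vᵀ Q v > 0`, then
`min {q(x) : c(x) = 0}` has a global minimizer. -/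
theorem stmt_11 (n : ℕ)
    (Q C : Matrix (Fin n) (Fin n) ℝ) (hQ : Q.IsSymm) (hC : C.IsSymm)
    (g h : Fin n → ℝ) (γq γc : ℝ)
    (q c : (Fin n → ℝ) → ℝ)
    (hq : ∀ x, q x = x ⬝ᵥ Q.mulVec x + 2 * (g ⬝ᵥ x) + γq)
    (hc : ∀ x, c x = x ⬝ᵥ C.mulVec x + 2 * (h ⬝ᵥ x) + γc)
    (hfeas : ∃ x, c x = 0)
    (hcond : ∀ v : Fin n → ℝ, v ≠ 0 → v ⬝ᵥ C.mulVec v = 0 → 0 < v ⬝ᵥ Q.mulVec v) :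
    ∃ xstar, c xstar = 0 ∧ ∀ x, c x = 0 → q xstar ≤ q x :=
  stmt_11_general n Q C g h γq γc q c hq hc hfeas hcond
end

section
/- Let q, c : ℝ^n → ℝ be quadratic functions with min_x c(x) < 0 < max_x c(x) and ∇²c ≠ 0. A vector x* is a global minimizer of min{q(x) : c(x) = 0} if and only if c(x*) = 0 and there exists λ* ∈ ℝ with ∇q(x*) + λ*∇c(x*) = 0 and ∇²q(x*) + λ*∇²c(x*) positive semidefinite. -/
/-!
Sufficiency is the second-order argument for the quadratic `q + λ* c`, whose gradient vanishes
at `x*` and whose Hessian is positive semidefinite. For necessity, take `c x < 0 < c y`. On the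
line through `x` and `y`, `c` is a quadratic with one root in `(0, 1)` and one outside `[0, 1]`,
and `q ≥ q x*` at both. Interpolating `q - q x*` at these two roots gives
`(q x - q x*) c y ≥ (q y - q x*) c x`; if `c` is affine on that line, the inequality follows by
a limit argument. Hence `sup_{c > 0} -(q - q x*) / c ≤ inf_{c < 0} (q - q x*) / (-c)`, and any
`λ*` in between makes `q + λ* c ≥ q x*` everywhere, with equality at `x*`.
-/

open Matrix Filter Topology

lemma quadratic_coeffs_of_forall_nonneg {a b : ℝ} (h : ∀ t : ℝ, 0 ≤ a * t ^ 2 + b * t) :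
    b = 0 ∧ 0 ≤ a := by
  have hdisc : b ^ 2 ≤ 0 := by
    simpa [discrim] using discrim_le_zero (a := a) (b := b) (c := 0) fun t => by linarith [h t]
  exact ⟨pow_eq_zero_iff two_ne_zero |>.1 (le_antisymm hdisc (sq_nonneg b)),
    by linarith [h 1, h (-1)]⟩

open Polynomial in
lemma eventually_quadratic_ne_zero {a : ℝ} (ha : a ≠ 0) (b c t₀ : ℝ) :
    ∀ᶠ t in 𝓝[≠] t₀, a * t ^ 2 + b * t + c ≠ 0 := by
  set p : ℝ[X] := C a * X ^ 2 + C b * X + C c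
  have hp : p ≠ 0 := fun h => ha (by simpa [p] using congrArg (coeff · 2) h)
  filter_upwards [nhdsNE_le_cofinite t₀ (finite_setOfPred_isRoot hp).eventually_cofinite_notMem]
    with t ht
  simpa [p] using ht

lemma exists_quadratic_factorization {A B E : ℝ} (hA : A ≠ 0) (hd : 0 ≤ discrim A B E) :
    ∃ r₁ r₂ : ℝ, ∀ t, A * t ^ 2 + B * t + E = A * (t - r₁) * (t - r₂) := by
  obtain ⟨s, hs⟩ : ∃ s, discrim A B E = s * s :=
    ⟨√(discrim A B E), (Real.mul_self_sqrt hd).symm⟩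
  refine ⟨(-B + s) / (2 * A), (-B - s) / (2 * A), fun t => ?_⟩
  unfold discrim at hs
  field_simp
  linear_combination (-1 : ℝ) * hs

/-- With `p t = A (t - r₁) (t - r₂)` and `f t = a t² + b t + e`, the functional
`f ↦ f 0 * p 1 - f 1 * p 0` vanishes at `p`, hence is a combination of `f r₁` and `f r₂`;
the sign change of `p` on `[0, 1]` makes both weights nonnegative. -/
lemma quadratic_two_root_interpolation {A r₁ r₂ a b e : ℝ} (h₀ : A * r₁ * r₂ < 0)
    (h₁ : 0 < A * (1 - r₁) * (1 - r₂)) (hf₁ : 0 ≤ a * r₁ ^ 2 + b * r₁ + e)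
    (hf₂ : 0 ≤ a * r₂ ^ 2 + b * r₂ + e) :
    0 ≤ e * (A * (1 - r₁) * (1 - r₂)) - (a + b + e) * (A * r₁ * r₂) := by
  set D := r₂ - r₁
  set α := A * r₂ * (1 - r₂)
  set β := -(A * r₁ * (1 - r₁))
  have hinterp : (e * (A * (1 - r₁) * (1 - r₂)) - (a + b + e) * (A * r₁ * r₂)) * D
      = α * (a * r₁ ^ 2 + b * r₁ + e) + β * (a * r₂ ^ 2 + b * r₂ + e) := by ring
  have hprod : 0 < α * β := by nlinarith
  have hsum : α + β = (A * (1 - r₁) * (1 - r₂) - A * r₁ * r₂) * D := by ring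
  have hD : D ≠ 0 := by
    rintro hD
    have : α * β = -(α * α) := by
      rw [show β = -α by
        linear_combination hsum + (A * (1 - r₁) * (1 - r₂) - A * r₁ * r₂) * hD]
      ring
    nlinarith [mul_self_nonneg α]
  have hprodD : 0 < (α * D) * (β * D) := by
    have := mul_pos hprod (mul_self_pos.2 hD); linarith
  have hsumD : 0 < α * D + β * D := by
    rw [← add_mul, hsum, mul_assoc]; exact mul_pos (by linarith) (mul_self_pos.2 hD)
  have hαD : 0 ≤ α * D := by nlinarith
  have hβD : 0 ≤ β * D := by nlinarith
  have : 0 ≤ (e * (A * (1 - r₁) * (1 - r₂)) - (a + b + e) * (A * r₁ * r₂)) * (D * D) := by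
    rw [← mul_assoc, hinterp]
    nlinarith [mul_nonneg hαD hf₁, mul_nonneg hβD hf₂]
  exact nonneg_of_mul_nonneg_left this (mul_self_pos.2 hD)

lemma quadratic_root_interpolation {A B E a b e : ℝ} (hA : A ≠ 0) (h₀ : E < 0)
    (h₁ : 0 < A + B + E) (hf : ∀ r, A * r ^ 2 + B * r + E = 0 → 0 ≤ a * r ^ 2 + b * r + e) :
    0 ≤ e * (A + B + E) - (a + b + e) * E := by
  have hdisc : 0 ≤ discrim A B E := by
    unfold discrim; nlinarith [sq_nonneg (2 * A + B), sq_nonneg B]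
  obtain ⟨r₁, r₂, hfac⟩ := exists_quadratic_factorization hA hdisc
  have hE : E = A * r₁ * r₂ := by simpa using hfac 0
  have hABE : A + B + E = A * (1 - r₁) * (1 - r₂) := by simpa using hfac 1
  rw [hE] at h₀
  rw [hABE] at h₁
  rw [hABE, hE]
  exact quadratic_two_root_interpolation h₀ h₁ (hf r₁ (by rw [hfac]; ring))
    (hf r₂ (by rw [hfac]; ring))

lemma exists_forall_nonneg_add_mul {α : Type*} {f c : α → ℝ} (hneg : ∃ x, c x < 0)
    (hpos : ∃ y, 0 < c y) (hzero : ∀ z, c z = 0 → 0 ≤ f z)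
    (hcross : ∀ x y, c x < 0 → 0 < c y → 0 ≤ f x * c y - f y * c x) :
    ∃ lam : ℝ, ∀ z, 0 ≤ f z + lam * c z := by
  set T := (fun z => f z / -c z) '' {z | c z < 0}
  have hlower {y} (hy : 0 < c y) : ∀ t ∈ T, -f y / c y ≤ t := by
    rintro _ ⟨x, hx, rfl⟩
    rw [div_le_div_iff₀ hy (neg_pos.2 hx)]
    linarith [hcross x y hx hy]
  obtain ⟨x₀, hx₀⟩ := hneg
  obtain ⟨y₀, hy₀⟩ := hpos
  have hbdd : BddBelow T := ⟨_, hlower hy₀⟩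
  refine ⟨sInf T, fun z => ?_⟩
  rcases lt_trichotomy (c z) 0 with hz | hz | hz
  · have := csInf_le hbdd ⟨z, hz, rfl⟩
    rw [le_div_iff₀ (neg_pos.2 hz)] at this
    linarith
  · simpa [hz] using hzero z hz
  · have := le_csInf (⟨_, x₀, hx₀, rfl⟩ : T.Nonempty) (hlower hz)
    rw [div_le_iff₀ hz] at this
    linarith

section Matrix

variable {ι : Type*} [Fintype ι]

lemma dotProduct_mulVec_add_smul {M : Matrix ι ι ℝ} (hM : M.IsSymm) (x d : ι → ℝ) (t : ℝ) :
    (x + t • d) ⬝ᵥ M *ᵥ (x + t • d)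
      = (d ⬝ᵥ M *ᵥ d) * t ^ 2 + 2 * (d ⬝ᵥ M *ᵥ x) * t + x ⬝ᵥ M *ᵥ x := by
  have hsymm : x ⬝ᵥ M *ᵥ d = d ⬝ᵥ M *ᵥ x := by
    rw [dotProduct_mulVec, ← mulVec_transpose, hM, dotProduct_comm]
  simp only [mulVec_add, mulVec_smul, dotProduct_add, add_dotProduct, dotProduct_smul,
    smul_dotProduct, smul_eq_mul, hsymm]
  ring

lemma exists_dotProduct_mulVec_ne_zero {M : Matrix ι ι ℝ} (hM : M.IsSymm) (hM0 : M ≠ 0) :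
    ∃ w, w ⬝ᵥ M *ᵥ w ≠ 0 := by
  by_contra! h
  refine hM0 (ext_iff_mulVec.2 fun v => ?_)
  have := dotProduct_mulVec_add_smul hM v (M *ᵥ v) 1
  simp only [h, one_smul, add_zero, zero_add, one_pow, mul_one] at this
  simpa using dotProduct_self_eq_zero.1 (by linarith : M *ᵥ v ⬝ᵥ M *ᵥ v = 0)

def quadFun (M : Matrix ι ι ℝ) (g : ι → ℝ) (γ : ℝ) (x : ι → ℝ) : ℝ :=
  x ⬝ᵥ M *ᵥ x + 2 * (g ⬝ᵥ x) + γ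

section QuadFun

variable {M : Matrix ι ι ℝ} {g : ι → ℝ} {γ : ℝ}

lemma quadFun_add_smul (hM : M.IsSymm) (x d : ι → ℝ) (t : ℝ) :
    quadFun M g γ (x + t • d)
      = (d ⬝ᵥ M *ᵥ d) * t ^ 2 + 2 * (d ⬝ᵥ (M *ᵥ x + g)) * t + quadFun M g γ x := by
  simp only [quadFun, dotProduct_mulVec_add_smul hM, dotProduct_add, dotProduct_smul,
    smul_eq_mul, dotProduct_comm d g]
  ring

@[fun_prop]
lemma continuous_quadFun : Continuous (quadFun M g γ) := by
  unfold quadFun; fun_prop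

lemma quadFun_add (M' : Matrix ι ι ℝ) (g' : ι → ℝ) (γ' : ℝ) (x : ι → ℝ) :
    quadFun (M + M') (g + g') (γ + γ') x = quadFun M g γ x + quadFun M' g' γ' x := by
  simp only [quadFun, add_mulVec, dotProduct_add, add_dotProduct]
  ring

lemma quadFun_smul (s : ℝ) (x : ι → ℝ) :
    quadFun (s • M) (s • g) (s * γ) x = s * quadFun M g γ x := by
  simp only [quadFun, smul_mulVec, dotProduct_smul, smul_dotProduct, smul_eq_mul]
  ring

lemma forall_quadFun_le_iff (hM : M.IsSymm) (x₀ : ι → ℝ) :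
    (∀ x, quadFun M g γ x₀ ≤ quadFun M g γ x) ↔ M *ᵥ x₀ + g = 0 ∧ M.PosSemidef := by
  constructor
  · intro hmin
    have hcoeffs (d : ι → ℝ) : d ⬝ᵥ (M *ᵥ x₀ + g) = 0 ∧ 0 ≤ d ⬝ᵥ M *ᵥ d := by
      obtain ⟨hlin, hquad⟩ := quadratic_coeffs_of_forall_nonneg
          (a := d ⬝ᵥ M *ᵥ d) (b := 2 * (d ⬝ᵥ (M *ᵥ x₀ + g))) fun t => by
        linarith [quadFun_add_smul (g := g) (γ := γ) hM x₀ d t, hmin (x₀ + t • d)]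
      exact ⟨by linarith, hquad⟩
    refine ⟨dotProduct_self_eq_zero.1 (hcoeffs _).1, posSemidef_iff_dotProduct_mulVec.2
      ⟨isHermitian_iff_isSymm.2 hM, fun d => by simpa using (hcoeffs d).2⟩⟩
  · rintro ⟨hgrad, hpsd⟩ x
    have hx := quadFun_add_smul (g := g) (γ := γ) hM x₀ (x - x₀) 1
    rw [one_smul, add_sub_cancel, hgrad, dotProduct_zero] at hx
    have := hpsd.dotProduct_mulVec_nonneg (x - x₀)
    simp only [star_trivial] at this
    linarith [hx]

end QuadFun

section Multiplier

variable {Q C : Matrix ι ι ℝ} {g h : ι → ℝ} {γq γc m : ℝ}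

lemma quadFun_mul_sub_mul_nonneg_of_ne_zero (hQ : Q.IsSymm) (hC : C.IsSymm)
    (hmin : ∀ z, quadFun C h γc z = 0 → m ≤ quadFun Q g γq z) {x y : ι → ℝ}
    (hx : quadFun C h γc x < 0) (hy : 0 < quadFun C h γc y)
    (hxy : (y - x) ⬝ᵥ C *ᵥ (y - x) ≠ 0) :
    0 ≤ (quadFun Q g γq x - m) * quadFun C h γc y
      - (quadFun Q g γq y - m) * quadFun C h γc x := by
  set d := y - x
  have hy_eq : y = x + (1 : ℝ) • d := by simp [d]
  have hcy := quadFun_add_smul (g := h) (γ := γc) hC x d 1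
  have hqy := quadFun_add_smul (g := g) (γ := γq) hQ x d 1
  rw [← hy_eq, one_pow, mul_one, mul_one] at hcy hqy
  have := quadratic_root_interpolation (a := d ⬝ᵥ Q *ᵥ d) (b := 2 * (d ⬝ᵥ (Q *ᵥ x + g)))
    (e := quadFun Q g γq x - m) hxy hx (hcy ▸ hy)
    fun r hr => by
      have := hmin (x + r • d) (by rw [quadFun_add_smul hC]; exact hr)
      rw [quadFun_add_smul hQ] at this
      linarith
  rw [hcy, hqy]
  convert this using 3
  ring

/-- The degenerate case `(y - x)ᵀ C (y - x) = 0` is reached as a limit of nondegenerate ones by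
moving `y` along a direction `w` with `wᵀ C w ≠ 0`. -/
lemma quadFun_mul_sub_mul_nonneg (hQ : Q.IsSymm) (hC : C.IsSymm) (hC0 : C ≠ 0)
    (hmin : ∀ z, quadFun C h γc z = 0 → m ≤ quadFun Q g γq z) {x y : ι → ℝ}
    (hx : quadFun C h γc x < 0) (hy : 0 < quadFun C h γc y) :
    0 ≤ (quadFun Q g γq x - m) * quadFun C h γc y
      - (quadFun Q g γq y - m) * quadFun C h γc x := by
  rcases ne_or_eq ((y - x) ⬝ᵥ C *ᵥ (y - x)) 0 with hxy | hxy
  · exact quadFun_mul_sub_mul_nonneg_of_ne_zero hQ hC hmin hx hy hxy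
  obtain ⟨w, hw⟩ := exists_dotProduct_mulVec_ne_zero hC hC0
  have hpos : ∀ᶠ ε in 𝓝[≠] (0 : ℝ), 0 < quadFun C h γc (y + ε • w) :=
    nhdsWithin_le_nhds <| continuousAt_const.eventually_lt (f := fun _ => (0 : ℝ))
      (by fun_prop) (by simpa using hy)
  have hnondeg : ∀ᶠ ε in 𝓝[≠] (0 : ℝ), (y + ε • w - x) ⬝ᵥ C *ᵥ (y + ε • w - x) ≠ 0 := by
    filter_upwards [eventually_quadratic_ne_zero hw (2 * (w ⬝ᵥ C *ᵥ (y - x))) 0 0] with ε hε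
    rwa [add_sub_right_comm, dotProduct_mulVec_add_smul hC, hxy]
  have hcont : Continuous fun ε : ℝ => (quadFun Q g γq x - m) * quadFun C h γc (y + ε • w)
      - (quadFun Q g γq (y + ε • w) - m) * quadFun C h γc x := by
    fun_prop
  refine ge_of_tendsto (x := 𝓝[≠] (0 : ℝ))
    ((hcont.tendsto' 0 _ (by simp)).mono_left nhdsWithin_le_nhds) ?_
  filter_upwards [hpos, hnondeg] with ε hε hε'
  exact quadFun_mul_sub_mul_nonneg_of_ne_zero hQ hC hmin hx hε hε'

lemma exists_forall_le_add_mul (hQ : Q.IsSymm) (hC : C.IsSymm) (hC0 : C ≠ 0)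
    (hneg : ∃ x, quadFun C h γc x < 0) (hpos : ∃ y, 0 < quadFun C h γc y) {x₀ : ι → ℝ}
    (hmin : ∀ z, quadFun C h γc z = 0 → quadFun Q g γq x₀ ≤ quadFun Q g γq z) :
    ∃ lam : ℝ, ∀ z, quadFun Q g γq x₀ ≤ quadFun Q g γq z + lam * quadFun C h γc z := by
  obtain ⟨lam, hlam⟩ := exists_forall_nonneg_add_mul hneg hpos
    (fun z hz => sub_nonneg.2 (hmin z hz))
    fun x y hx hy => quadFun_mul_sub_mul_nonneg hQ hC hC0 hmin hx hy
  exact ⟨lam, fun z => by linarith [hlam z]⟩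

end Multiplier

end Matrix

/-- Moré's characterization of global minimizers of the GTRS: for quadratics
`q, c` with `min c < 0 < max c` and `∇²c ≠ 0`, `x*` is a global minimizer of
`min {q(x) : c(x) = 0}` iff `c(x*) = 0` and there is `λ*` with
`∇q(x*) + λ* ∇c(x*) = 0` and `∇²q + λ* ∇²c` positive semidefinite. -/
theorem stmt_12 (n : ℕ)
    (Q C : Matrix (Fin n) (Fin n) ℝ) (hQ : Q.IsSymm) (hC : C.IsSymm)
    (g h : Fin n → ℝ) (γq γc : ℝ)
    (q c : (Fin n → ℝ) → ℝ)
    (hq : ∀ x, q x = x ⬝ᵥ Q.mulVec x + 2 * (g ⬝ᵥ x) + γq)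
    (hc : ∀ x, c x = x ⬝ᵥ C.mulVec x + 2 * (h ⬝ᵥ x) + γc)
    (hneg : ∃ x, c x < 0) (hpos : ∃ x, 0 < c x) (hCne : C ≠ 0)
    (xstar : Fin n → ℝ) :
    (c xstar = 0 ∧ ∀ x, c x = 0 → q xstar ≤ q x) ↔
    (c xstar = 0 ∧ ∃ lam : ℝ,
      Q.mulVec xstar + g + lam • (C.mulVec xstar + h) = 0 ∧
      (Q + lam • C).PosSemidef) := by
  obtain rfl : q = quadFun Q g γq := funext hq
  obtain rfl : c = quadFun C h γc := funext hc
  have hlagrangian (lam : ℝ) (x : Fin n → ℝ) :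
      quadFun (Q + lam • C) (g + lam • h) (γq + lam * γc) x
        = quadFun Q g γq x + lam * quadFun C h γc x := by
    rw [quadFun_add, quadFun_smul]
  have hgrad (lam : ℝ) : (Q + lam • C) *ᵥ xstar + (g + lam • h)
      = Q *ᵥ xstar + g + lam • (C *ᵥ xstar + h) := by
    rw [add_mulVec, smul_mulVec, smul_add]; abel
  refine and_congr_right fun hxstar => ⟨fun hmin => ?_, ?_⟩
  · obtain ⟨lam, hlam⟩ := exists_forall_le_add_mul hQ hC hCne hneg hpos hmin
    refine ⟨lam, ?_⟩
    rw [← hgrad lam]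
    refine (forall_quadFun_le_iff (γ := γq + lam * γc) (hQ.add (hC.smul lam)) xstar).1
      fun x => ?_
    simpa [hlagrangian, hxstar] using hlam x
  · rintro ⟨lam, hstat, hpsd⟩ x hx
    have := (forall_quadFun_le_iff (γ := γq + lam * γc) (hQ.add (hC.smul lam)) xstar).2
      ⟨hgrad lam ▸ hstat, hpsd⟩ x
    simpa [hlagrangian, hxstar, hx] using this
end
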